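/- arXiv:1408.5043 — 2 statements merged into one kernel-verified Lean document; each statement's English description precedes it below -/
import Mathlib

section
/- Let f(x) = a_N x^N + ⋯ + a_1 x + a_0 = a_N ∏_{n=1}^N (x − γ_n) be a polynomial with complex coefficients and a_N ≠ 0, and let M(f) = |a_N| ∏_{n=1}^N max{1, |γ_n|} be its Mahler measure. Then for every 0 ≤ n ≤ N, |a_n| ≤ C(N, n) · M(f), where C(N,n) is the binomial coefficient. -/
open Polynomial

theorem coeff_le_choose_mul_mahler_general (f : Polynomial ℂ) (n : ℕ) :
    ‖f.coeff n‖ ≤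
      (f.natDegree.choose n : ℝ) *
        (‖f.leadingCoeff‖ *
          (f.roots.map (fun z => max 1 ‖z‖)).prod) := by
  rw [← mahlerMeasure_eq_leadingCoeff_mul_prod_roots]
  exact norm_coeff_le_choose_mul_mahlerMeasure n f

theorem coeff_le_choose_mul_mahler (f : Polynomial ℂ) (hf : f ≠ 0) (n : ℕ)
    (hn : n ≤ f.natDegree) :
    ‖f.coeff n‖ ≤
      (f.natDegree.choose n : ℝ) *
        (‖f.leadingCoeff‖ *
          (f.roots.map (fun z => max 1 ‖z‖)).prod) :=
  coeff_le_choose_mul_mahler_general f n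
end

section
/- For any nonzero algebraic number α and real C ≥ 1, the set of algebraic numbers γ in a fixed number field K with M(γ) ≤ C is finite, where M(γ) = H(γ)^{deg γ}. -/
open Polynomial

/-- The primitive integer minimal polynomial of an algebraic number. -/
noncomputable def intMinpoly (α : ℂ) : Polynomial ℤ :=
  (IsLocalization.integerNormalization (nonZeroDivisors ℤ) (minpoly ℚ α)).primPart

/-- Mahler measure of an integer polynomial. -/
noncomputable def polyMahler (f : Polynomial ℤ) : ℝ :=
  |(f.leadingCoeff : ℝ)| *
    ((f.map (Int.castRingHom ℂ)).roots.map (fun z => max 1 ‖z‖)).prod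

/-- Mahler measure of an algebraic number. -/
noncomputable def mahlerM (α : ℂ) : ℝ := polyMahler (intMinpoly α)

/-- Absolute multiplicative Weil height. -/
noncomputable def height (α : ℂ) : ℝ :=
  mahlerM α ^ ((1 : ℝ) / (minpoly ℚ α).natDegree)

/-! An algebraic number `γ` of degree at most `d` with `M(γ) ≤ C` is a root of its primitive
integer minimal polynomial, which has degree at most `d` and Mahler measure `M(γ) ≤ C`. By
Northcott's theorem for integer polynomials (`Polynomial.finite_mahlerMeasure_le`) there are
finitely many such polynomials, each with finitely many roots; elements of `K` have degree at
most `[K : ℚ]`. -/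

lemma polyMahler_eq_mahlerMeasure (f : ℤ[X]) :
    polyMahler f = (f.map (Int.castRingHom ℂ)).mahlerMeasure := by
  rw [polyMahler, mahlerMeasure_eq_leadingCoeff_mul_prod_roots,
    leadingCoeff_map_of_injective (RingHom.injective_int _)]
  simp

lemma intMinpoly_ne_zero (α : ℂ) : intMinpoly α ≠ 0 :=
  primPart_ne_zero _

lemma natDegree_intMinpoly_le (α : ℂ) :
    (intMinpoly α).natDegree ≤ (minpoly ℚ α).natDegree := by
  rw [intMinpoly, natDegree_primPart]
  exact natDegree_le_natDegree (degree_mono (IsLocalization.integerNormalization_support _ _))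

lemma aeval_intMinpoly_self {α : ℂ} (hα : IsIntegral ℚ α) : aeval α (intMinpoly α) = 0 :=
  aeval_primPart_eq_zero
    (IsFractionRing.integerNormalization_eq_zero_iff.not.mpr (minpoly.ne_zero hα))
    (IsLocalization.integerNormalization_aeval_eq_zero _ _ (minpoly.aeval ℚ α))

lemma mem_rootSet_intMinpoly {α : ℂ} (hα : IsIntegral ℚ α) : α ∈ (intMinpoly α).rootSet ℂ :=
  mem_rootSet.mpr ⟨intMinpoly_ne_zero α, aeval_intMinpoly_self hα⟩

theorem finite_setOf_natDegree_minpoly_le_mahlerM_le (d : ℕ) (C : ℝ) :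
    {γ : ℂ | IsIntegral ℚ γ ∧ (minpoly ℚ γ).natDegree ≤ d ∧ mahlerM γ ≤ C}.Finite := by
  refine ((finite_mahlerMeasure_le d C.toNNReal).biUnion fun p _ ↦ p.rootSet_finite ℂ).subset ?_
  rintro γ ⟨hγ, hdeg, hM⟩
  refine Set.mem_biUnion (x := intMinpoly γ) ⟨(natDegree_intMinpoly_le γ).trans hdeg, ?_⟩
    (mem_rootSet_intMinpoly hγ)
  rw [← polyMahler_eq_mahlerMeasure]
  exact hM.trans (Real.le_coe_toNNReal C)

theorem northcott_general (K : IntermediateField ℚ ℂ) [FiniteDimensional ℚ K] (C : ℝ) :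
    {γ : ℂ | γ ∈ K ∧ mahlerM γ ≤ C}.Finite := by
  refine (finite_setOf_natDegree_minpoly_le_mahlerM_le (Module.finrank ℚ K) C).subset ?_
  rintro γ ⟨hγK, hM⟩
  have hint : IsIntegral ℚ (⟨γ, hγK⟩ : K) := .of_finite ℚ _
  refine ⟨K.isIntegral_iff.mp hint, ?_, hM⟩
  rw [← K.minpoly_eq ⟨γ, hγK⟩]
  exact minpoly.natDegree_le _

theorem northcott (K : IntermediateField ℚ ℂ) [FiniteDimensional ℚ K]
    (α : ℂ) (hα : IsAlgebraic ℚ α) (hαne : α ≠ 0) (C : ℝ) (hC : 1 ≤ C) :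
    {γ : ℂ | γ ∈ K ∧ mahlerM γ ≤ C}.Finite :=
  northcott_general K C
end
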